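/- arXiv:2407.20526 — 5 statements merged into one kernel-verified Lean document; each statement's English description precedes it below -/
import Mathlib

section
/- Let H be an m×n matrix over F_2 with maximum row weight w_c and maximum column weight w_q, and define the energy of v ∈ F_2^n as ε(v) = wt(H·v) and the energy barrier Δ(s) as the min over single-bit-flip paths from 0 to s of the max energy along the path. Then for any vector s that is a sum of vectors s_1, ..., s_k each satisfying H·s_i = 0 and wt(s_i) ≤ w_c, the energy barrier satisfies Δ(s) ≤ w_c · w_q. -/
open Matrix Kronecker

/-- Hamming weight of a vector over `ZMod 2`. -/
def wt {α : Type*} [Fintype α] (v : α → ZMod 2) : ℕ :=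
  (Finset.univ.filter fun i => v i ≠ 0).card

/-- Number of nonzero entries of a matrix over `ZMod 2`. -/
def mwt {α β : Type*} [Fintype α] [Fintype β] (M : Matrix α β (ZMod 2)) : ℕ :=
  (Finset.univ.filter fun p : α × β => M p.1 p.2 ≠ 0).card

/-- Energy barrier of a vector `s` w.r.t. parity check matrix `H`: the minimum over
single-bit-flip paths from `0` to `s` of the maximum energy `wt (H·v)` along the path. -/
noncomputable def eb {α β : Type*} [Fintype α] [Fintype β] (H : Matrix α β (ZMod 2)) (s : β → ZMod 2) : ℕ :=
  sInf {B | ∃ F : ℕ, ∃ v : Fin (F + 1) → β → ZMod 2,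
    v 0 = 0 ∧ v (Fin.last F) = s ∧
    (∀ i : Fin F, wt (v i.castSucc + v i.succ) ≤ 1) ∧
    ∀ i, wt (H.mulVec (v i)) ≤ B}

/-- Energy barrier of a classical code: minimum of `eb` over nonzero codewords. -/
noncomputable def codeEB {α β : Type*} [Fintype α] [Fintype β] (M : Matrix α β (ZMod 2)) : ℕ :=
  sInf {E | ∃ c, c ≠ 0 ∧ M.mulVec c = 0 ∧ eb M c = E}

/-- The X-type parity check matrix of the hypergraph product code. -/
def HX {r1 n1 r2 n2 : ℕ} (H1 : Matrix (Fin r1) (Fin n1) (ZMod 2))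
    (H2 : Matrix (Fin r2) (Fin n2) (ZMod 2)) :
    Matrix (Fin r1 × Fin n2) ((Fin n1 × Fin n2) ⊕ (Fin r1 × Fin r2)) (ZMod 2) :=
  Matrix.fromCols (H1 ⊗ₖ (1 : Matrix (Fin n2) (Fin n2) (ZMod 2)))
    ((1 : Matrix (Fin r1) (Fin r1) (ZMod 2)) ⊗ₖ H2ᵀ)

/-! Flip the supports of `s₁, …, s_k` one bit at a time, in this order. While the bits of `sᵢ`
are being flipped the current vector is `s₁ + ⋯ + sᵢ₋₁ + u` with `supp u ⊆ supp sᵢ`; the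
completed generators lie in `ker H`, so the energy is `wt (H u) ≤ w_q · wt u ≤ w_q · w_c`. -/

section Weight

variable {α β : Type*} [Fintype α] [Fintype β]

lemma wt_le_wt_of_support_subset {u v : α → ZMod 2} (h : ∀ i, u i ≠ 0 → v i ≠ 0) :
    wt u ≤ wt v :=
  Finset.card_le_card fun i hi => by simp_all [Finset.mem_filter]

lemma wt_le_one_of_support_subsingleton {v : α → ZMod 2}
    (h : ∀ i j, v i ≠ 0 → v j ≠ 0 → i = j) : wt v ≤ 1 :=
  Finset.card_le_one.mpr fun i hi j hj =>
    h i j (Finset.mem_filter.mp hi).2 (Finset.mem_filter.mp hj).2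

lemma wt_mulVec_le_mul_wt (H : Matrix α β (ZMod 2)) {w : ℕ} (hcol : ∀ j, wt (fun i => H i j) ≤ w)
    (u : β → ZMod 2) : wt (H *ᵥ u) ≤ w * wt u := by
  classical
  have hsupp : (Finset.univ.filter fun i => (H *ᵥ u) i ≠ 0) ⊆
      (Finset.univ.filter fun j => u j ≠ 0).biUnion
        fun j => Finset.univ.filter fun i => H i j ≠ 0 := by
    intro i hi
    obtain ⟨j, -, hj⟩ := Finset.exists_ne_zero_of_sum_ne_zero (Finset.mem_filter.mp hi).2
    obtain ⟨hHij, huj⟩ := mul_ne_zero_iff.mp hj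
    simp only [Finset.mem_biUnion, Finset.mem_filter, Finset.mem_univ, true_and]
    exact ⟨j, huj, hHij⟩
  calc wt (H *ᵥ u) ≤ wt u * w :=
        (Finset.card_le_card hsupp).trans (Finset.card_biUnion_le_card_mul _ _ _ fun j _ => hcol j)
    _ = w * wt u := mul_comm _ _

end Weight

lemma eb_le_of_path {α β : Type*} [Fintype α] [Fintype β] (H : Matrix α β (ZMod 2))
    {s : β → ZMod 2} {B : ℕ} (v : ℕ → β → ZMod 2) (N : ℕ) (h0 : v 0 = 0) (hN : v N = s)
    (hstep : ∀ t, wt (v t + v (t + 1)) ≤ 1) (henergy : ∀ t, wt (H *ᵥ v t) ≤ B) :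
    eb H s ≤ B :=
  Nat.sInf_le ⟨N, fun t => v t, h0, hN, fun t => hstep t, fun t => henergy t⟩

namespace BitFlipPath

variable {n k : ℕ}

def trunc (u : Fin n → ZMod 2) (r : ℕ) : Fin n → ZMod 2 :=
  fun j => if (j : ℕ) < r then u j else 0

lemma trunc_zero (u : Fin n → ZMod 2) : trunc u 0 = 0 := by
  ext j; simp [trunc]

lemma trunc_of_le (u : Fin n → ZMod 2) {r : ℕ} (hr : n ≤ r) : trunc u r = u := by
  ext j; simp [trunc, j.isLt.trans_le hr]

lemma wt_trunc_le (u : Fin n → ZMod 2) (r : ℕ) : wt (trunc u r) ≤ wt u :=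
  wt_le_wt_of_support_subset fun j hj => by
    by_cases h : (j : ℕ) < r <;> simp_all [trunc]

/-- The point reached after `t` bit flips: generator `i` is flipped during the time
steps `i * n, …, i * n + n - 1`. -/
def sweep (sgen : Fin k → Fin n → ZMod 2) (t : ℕ) : Fin n → ZMod 2 :=
  ∑ i, trunc (sgen i) (t - i * n)

lemma sweep_apply (sgen : Fin k → Fin n → ZMod 2) (t : ℕ) (j : Fin n) :
    sweep sgen t j = ∑ i : Fin k, if (i : ℕ) * n + j < t then sgen i j else 0 := by
  simp only [sweep, Finset.sum_apply, trunc, Nat.lt_sub_iff_add_lt']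

lemma sweep_zero (sgen : Fin k → Fin n → ZMod 2) : sweep sgen 0 = 0 := by
  simp [sweep, trunc_zero]

lemma sweep_mul (sgen : Fin k → Fin n → ZMod 2) : sweep sgen (k * n) = ∑ i, sgen i := by
  refine Finset.sum_congr rfl fun i _ => trunc_of_le _ ?_
  have : (i + 1 : ℕ) * n ≤ k * n := Nat.mul_le_mul_right n i.isLt
  rw [Nat.add_one_mul] at this
  omega

lemma wt_sweep_add_sweep_succ_le_one (sgen : Fin k → Fin n → ZMod 2) (t : ℕ) :
    wt (sweep sgen t + sweep sgen (t + 1)) ≤ 1 := by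
  suffices h : ∀ j : Fin n, (j : ℕ) ≠ t % n → sweep sgen t j = sweep sgen (t + 1) j by
    refine wt_le_one_of_support_subsingleton fun j j' hj hj' => Fin.ext ?_
    have flipped : ∀ j : Fin n, (sweep sgen t + sweep sgen (t + 1)) j ≠ 0 → (j : ℕ) = t % n :=
      fun j hj => by_contra fun hne => hj (by simp [h j hne, CharTwo.add_self_eq_zero])
    exact (flipped j hj).trans (flipped j' hj').symm
  intro j hj
  simp only [sweep_apply]
  refine Finset.sum_congr rfl fun i _ => if_congr ?_ rfl rfl
  have : (i : ℕ) * n + j ≠ t := fun h =>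
    hj (by rw [← h, Nat.mul_comm, Nat.mul_add_mod, Nat.mod_eq_of_lt j.isLt])
  omega

lemma mulVec_trunc_eq_zero_of_not_lt_lt {α : Type*} [Fintype α]
    {H : Matrix α (Fin n) (ZMod 2)} {u : Fin n → ZMod 2} (hu : H *ᵥ u = 0) {a t : ℕ}
    (h : ¬(a < t ∧ t < a + n)) :
    H *ᵥ trunc u (t - a) = 0 := by
  rcases le_or_gt t a with hta | hat
  · rw [Nat.sub_eq_zero_of_le hta, trunc_zero, Matrix.mulVec_zero]
  · rw [trunc_of_le u (by omega), hu]

lemma wt_mulVec_sweep_le {α : Type*} [Fintype α] (H : Matrix α (Fin n) (ZMod 2))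
    {w_c w_q : ℕ} (hcol : ∀ j, wt (fun i => H i j) ≤ w_q) (sgen : Fin k → Fin n → ZMod 2)
    (hker : ∀ i, H *ᵥ sgen i = 0) (hwt : ∀ i, wt (sgen i) ≤ w_c) (t : ℕ) :
    wt (H *ᵥ sweep sgen t) ≤ w_c * w_q := by
  set f : Fin k → α → ZMod 2 := fun i => H *ᵥ trunc (sgen i) (t - i * n)
  have hsum : H *ᵥ sweep sgen t = ∑ i, f i := by simp only [f, sweep, Matrix.mulVec_sum]
  have active : ∀ i, f i ≠ 0 → (i : ℕ) = t / n := fun i hi => by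
    by_contra hne
    refine hi (mulVec_trunc_eq_zero_of_not_lt_lt (hker i) fun ⟨lo, hi⟩ => hne ?_)
    exact (Nat.div_eq_of_lt_le lo.le (by rwa [Nat.add_one_mul])).symm
  by_cases hex : ∃ i, f i ≠ 0
  · obtain ⟨i, hi⟩ := hex
    rw [hsum, Finset.sum_eq_single i (fun i' _ hne => by_contra fun hi' =>
      hne (Fin.ext ((active i' hi').trans (active i hi).symm))) (by simp)]
    calc wt (f i) ≤ w_q * wt (trunc (sgen i) (t - i * n)) := wt_mulVec_le_mul_wt H hcol _
      _ ≤ w_q * w_c := Nat.mul_le_mul_left _ ((wt_trunc_le _ _).trans (hwt i))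
      _ = w_c * w_q := mul_comm _ _
  · simp only [not_exists, not_not] at hex
    simp [hsum, hex, wt]

end BitFlipPath

open BitFlipPath in
theorem stmt1_general {m n k : ℕ} (H : Matrix (Fin m) (Fin n) (ZMod 2)) (w_c w_q : ℕ)
    (hcol : ∀ j, wt (fun i => H i j) ≤ w_q)
    (sgen : Fin k → Fin n → ZMod 2)
    (hker : ∀ i, H.mulVec (sgen i) = 0) (hwt : ∀ i, wt (sgen i) ≤ w_c)
    (s : Fin n → ZMod 2) (hs : s = ∑ i, sgen i) :
    eb H s ≤ w_c * w_q :=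
  eb_le_of_path H (sweep sgen) (k * n) (sweep_zero sgen) (hs ▸ sweep_mul sgen)
    (wt_sweep_add_sweep_succ_le_one sgen) (wt_mulVec_sweep_le H hcol sgen hker hwt)

theorem stmt1 {m n k : ℕ} (H : Matrix (Fin m) (Fin n) (ZMod 2)) (w_c w_q : ℕ)
    (hrow : ∀ i, wt (H i) ≤ w_c) (hcol : ∀ j, wt (fun i => H i j) ≤ w_q)
    (sgen : Fin k → Fin n → ZMod 2)
    (hker : ∀ i, H.mulVec (sgen i) = 0) (hwt : ∀ i, wt (sgen i) ≤ w_c)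
    (s : Fin n → ZMod 2) (hs : s = ∑ i, sgen i) :
    eb H s ≤ w_c * w_q :=
  stmt1_general H w_c w_q hcol sgen hker hwt s hs
end

section
/- Let H_1 be an r_1×n_1 matrix and H_2 an r_2×n_2 matrix over F_2. Define H_X = (H_1 ⊗ I_{n_2} | I_{r_1} ⊗ H_2^T) as an (r_1·n_2) × (n_1·n_2 + r_1·r_2) matrix and H_Z = (I_{n_1} ⊗ H_2 | H_1^T ⊗ I_{r_2}) as an (n_1·r_2) × (n_1·n_2 + r_1·r_2) matrix. Then H_X · H_Z^T = 0. -/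
open Matrix Kronecker

/-! Both blocks of the product equal `H₁ ⊗ H₂ᵀ` by the mixed-product rule for Kronecker
products, so their sum vanishes in characteristic two. -/

theorem fromCols_kronecker_mul_transpose_fromCols_kronecker {R l m n p : Type*}
    [CommSemiring R] [Fintype l] [Fintype m] [Fintype n] [Fintype p]
    [DecidableEq l] [DecidableEq m] [DecidableEq n] [DecidableEq p]
    (A : Matrix l m R) (B : Matrix n p R) :
    fromCols (A ⊗ₖ (1 : Matrix p p R)) ((1 : Matrix l l R) ⊗ₖ Bᵀ) *
        (fromCols ((1 : Matrix m m R) ⊗ₖ B) (Aᵀ ⊗ₖ (1 : Matrix n n R)))ᵀ =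
      A ⊗ₖ Bᵀ + A ⊗ₖ Bᵀ := by
  rw [transpose_fromCols, fromCols_mul_fromRows, ← kroneckerMap_transpose,
    ← kroneckerMap_transpose, transpose_one, transpose_one, transpose_transpose,
    ← mul_kronecker_mul, ← mul_kronecker_mul, Matrix.one_mul, Matrix.mul_one,
    Matrix.mul_one, Matrix.one_mul]

theorem fromCols_kronecker_mul_transpose_fromCols_kronecker_eq_zero {R l m n p : Type*}
    [CommRing R] [CharP R 2] [Fintype l] [Fintype m] [Fintype n] [Fintype p]
    [DecidableEq l] [DecidableEq m] [DecidableEq n] [DecidableEq p]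
    (A : Matrix l m R) (B : Matrix n p R) :
    fromCols (A ⊗ₖ (1 : Matrix p p R)) ((1 : Matrix l l R) ⊗ₖ Bᵀ) *
        (fromCols ((1 : Matrix m m R) ⊗ₖ B) (Aᵀ ⊗ₖ (1 : Matrix n n R)))ᵀ = 0 := by
  rw [fromCols_kronecker_mul_transpose_fromCols_kronecker]
  ext
  exact CharTwo.add_self_eq_zero _

theorem stmt4 {r1 n1 r2 n2 : ℕ}
    (H1 : Matrix (Fin r1) (Fin n1) (ZMod 2)) (H2 : Matrix (Fin r2) (Fin n2) (ZMod 2)) :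
    (Matrix.fromCols (H1 ⊗ₖ (1 : Matrix (Fin n2) (Fin n2) (ZMod 2)))
        ((1 : Matrix (Fin r1) (Fin r1) (ZMod 2)) ⊗ₖ H2ᵀ)) *
      (Matrix.fromCols ((1 : Matrix (Fin n1) (Fin n1) (ZMod 2)) ⊗ₖ H2)
        (H1ᵀ ⊗ₖ (1 : Matrix (Fin r2) (Fin r2) (ZMod 2))))ᵀ = 0 :=
  fromCols_kronecker_mul_transpose_fromCols_kronecker_eq_zero H1 H2
end

section
/- Let H_1 be r_1×n_1 and H_2 be r_2×n_2 matrices over F_2. Let Z^{(1)} be an n_1×n_2 matrix and Z^{(2)} an r_1×r_2 matrix over F_2. Let L_c ∈ F_2^{n_2} be a codeword of H_2 (H_2·L_c = 0), and define z^{1,s} = Z^{(1)}·L_c ∈ F_2^{n_1} (the sum over columns of Z^{(1)} indexed by the support of L_c). Then wt(H_1·z^{1,s}) ≤ wt(H_1·Z^{(1)} + Z^{(2)}·H_2). -/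
open Matrix Kronecker

open Finset in
/-- Each nonzero entry of `M *ᵥ x` lies in a row of `M` containing a nonzero entry. -/
lemma wt_mulVec_le_mwt {α β : Type*} [Fintype α] [Fintype β]
    (M : Matrix α β (ZMod 2)) (x : β → ZMod 2) :
    wt (M *ᵥ x) ≤ mwt M := by
  classical
  calc wt (M *ᵥ x)
      ≤ #((univ.filter fun p : α × β => M p.1 p.2 ≠ 0).image Prod.fst) := by
        refine card_le_card fun i hi => ?_
        obtain ⟨k, -, hk⟩ := exists_ne_zero_of_sum_ne_zero (mem_filter.1 hi).2
        exact mem_image.2 ⟨(i, k), mem_filter.2 ⟨mem_univ _, left_ne_zero_of_mul hk⟩, rfl⟩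
    _ ≤ mwt M := card_image_le

theorem stmt6 {r1 n1 r2 n2 : ℕ}
    (H1 : Matrix (Fin r1) (Fin n1) (ZMod 2)) (H2 : Matrix (Fin r2) (Fin n2) (ZMod 2))
    (Z1 : Matrix (Fin n1) (Fin n2) (ZMod 2)) (Z2 : Matrix (Fin r1) (Fin r2) (ZMod 2))
    (Lc : Fin n2 → ZMod 2) (hLc : H2.mulVec Lc = 0) :
    wt (H1.mulVec (Z1.mulVec Lc)) ≤ mwt (H1 * Z1 + Z2 * H2) := by
  have hsyndrome : H1 *ᵥ (Z1 *ᵥ Lc) = (H1 * Z1 + Z2 * H2) *ᵥ Lc := by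
    rw [add_mulVec, ← mulVec_mulVec, ← mulVec_mulVec, hLc, mulVec_zero, add_zero]
  rw [hsyndrome]
  exact wt_mulVec_le_mwt _ _
end

section
/- Let H_1 (r_1×n_1) and H_2 (r_2×n_2) be matrices over F_2, and let H_X = (H_1 ⊗ I_{n_2} | I_{r_1} ⊗ H_2^T). Fix a column index α ∈ {1,...,n_2} and a codeword x̄ ∈ ker(H_1). Consider the vector L = (x̄ ⊗ e_α, 0) ∈ F_2^{n_1 n_2 + r_1 r_2}. Then for any single-bit-flip path 0 = v_0, v_1, ..., v_F = L in which every v_i is supported on coordinates {(i,α) : 1 ≤ i ≤ n_1} (the column-α block of the first component), writing v_i = (u_i ⊗ e_α, 0) with u_i ∈ F_2^{n_1}, the energy satisfies wt(H_X·v_i) = wt(H_1·u_i). Consequently the maximum energy along any such path is at least Δ_{H_1}(x̄), the classical energy barrier of x̄ with respect to H_1. -/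
open Matrix Kronecker

/-!
A vector supported on the column-`α` block is `(u ⊗ e_α, 0)`, and `H_X` maps it to
`(H₁ u) ⊗ e_α`, since `(H₁ ⊗ I)(u ⊗ e_α) = H₁u ⊗ e_α` and the second block contributes nothing.
Tensoring with `e_α` preserves Hamming weight, so energies agree and the path `v` projects to a
single-bit-flip path `u` from `0` to `x̄`, whose maximal energy bounds `Δ_{H₁}(x̄)` from above.
-/

/-- The vector `w ⊗ e_α`. -/
def colVec {A B : Type*} [DecidableEq B] (α : B) (w : A → ZMod 2) : A × B → ZMod 2 :=
  fun p => if p.2 = α then w p.1 else 0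

section colVec

variable {A B : Type*} [DecidableEq B] (α : B)

@[simp]
lemma colVec_apply (w : A → ZMod 2) (a : A) (b : B) :
    colVec α w (a, b) = if b = α then w a else 0 := rfl

@[simp]
lemma colVec_zero : colVec α (0 : A → ZMod 2) = 0 := by
  funext p; simp [colVec]

lemma colVec_add (w w' : A → ZMod 2) : colVec α (w + w') = colVec α w + colVec α w' := by
  funext p; by_cases h : p.2 = α <;> simp [colVec, h]

lemma colVec_injective : Function.Injective (colVec (A := A) α) := fun w w' h =>
  funext fun a => by simpa using congrFun h (a, α)

lemma wt_colVec [Fintype A] [Fintype B] (w : A → ZMod 2) : wt (colVec α w) = wt w := by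
  refine (Finset.card_bij (fun a _ => (a, α)) ?_ ?_ ?_).symm
  · intro a ha; simpa using (Finset.mem_filter.mp ha).2
  · intro a _ b _ h; simpa using congrArg Prod.fst h
  · rintro ⟨a, b⟩ hab
    have hne := (Finset.mem_filter.mp hab).2
    obtain rfl : b = α := by by_contra hb; simp [hb] at hne
    exact ⟨a, by simpa using hne, rfl⟩

end colVec

lemma sumElim_zero_add {A C : Type*} (f g : A → ZMod 2) :
    Sum.elim (f + g) (0 : C → ZMod 2) = Sum.elim f 0 + Sum.elim g 0 := by
  funext x; cases x <;> simp

lemma wt_sumElim_zero {A C : Type*} [Fintype A] [Fintype C] (f : A → ZMod 2) :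
    wt (Sum.elim f (0 : C → ZMod 2)) = wt f := by
  refine (Finset.card_bij (fun a _ => Sum.inl a) ?_ ?_ ?_).symm
  · intro a ha; simpa using (Finset.mem_filter.mp ha).2
  · intro a _ b _ h; simpa using h
  · rintro (a | c) hx
    · exact ⟨a, by simpa using (Finset.mem_filter.mp hx).2, rfl⟩
    · simp at hx

lemma HX_mulVec_colVec {r1 n1 r2 n2 : ℕ} (H1 : Matrix (Fin r1) (Fin n1) (ZMod 2))
    (H2 : Matrix (Fin r2) (Fin n2) (ZMod 2)) (α : Fin n2) (w : Fin n1 → ZMod 2) :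
    (HX H1 H2).mulVec (Sum.elim (colVec α w) 0) = colVec α (H1.mulVec w) := by
  funext ⟨r, β⟩
  simp only [HX, fromCols_mulVec_sumElim, mulVec_zero, add_zero]
  simp only [mulVec, dotProduct, Fintype.sum_prod_type, kroneckerMap_apply, one_apply, colVec,
    mul_ite, ite_mul, zero_mul, mul_zero]
  simp [Finset.sum_ite_eq, eq_comm]

lemma eb_le_sup_of_path {A B : Type*} [Fintype A] [Fintype B] (H : Matrix A B (ZMod 2))
    (s : B → ZMod 2) {F : ℕ} (u : Fin (F + 1) → B → ZMod 2) (h0 : u 0 = 0)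
    (hlast : u (Fin.last F) = s) (hstep : ∀ i : Fin F, wt (u i.castSucc + u i.succ) ≤ 1) :
    eb H s ≤ Finset.univ.sup fun i => wt (H.mulVec (u i)) :=
  Nat.sInf_le ⟨F, u, h0, hlast, hstep,
    fun i => Finset.le_sup (f := fun i => wt (H.mulVec (u i))) (Finset.mem_univ i)⟩

theorem stmt9_general {r1 n1 r2 n2 F : ℕ}
    (H1 : Matrix (Fin r1) (Fin n1) (ZMod 2)) (H2 : Matrix (Fin r2) (Fin n2) (ZMod 2))
    (α : Fin n2) (xbar : Fin n1 → ZMod 2)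
    (v : Fin (F + 1) → (Fin n1 × Fin n2) ⊕ (Fin r1 × Fin r2) → ZMod 2)
    (u : Fin (F + 1) → Fin n1 → ZMod 2)
    (hform : ∀ i, v i = Sum.elim (fun p => if p.2 = α then u i p.1 else 0) 0)
    (h0 : v 0 = 0)
    (hlast : v (Fin.last F) = Sum.elim (fun p => if p.2 = α then xbar p.1 else 0) 0)
    (hstep : ∀ i : Fin F, wt (v i.castSucc + v i.succ) ≤ 1) :
    (∀ i, wt ((HX H1 H2).mulVec (v i)) = wt (H1.mulVec (u i))) ∧
    eb H1 xbar ≤ Finset.univ.sup (fun i => wt ((HX H1 H2).mulVec (v i))) := by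
  have hv : ∀ i, v i = Sum.elim (colVec α (u i)) 0 := hform
  have hembed : Function.Injective fun w : Fin n1 → ZMod 2 =>
      (Sum.elim (colVec α w) 0 : (Fin n1 × Fin n2) ⊕ (Fin r1 × Fin r2) → ZMod 2) :=
    fun w w' h => colVec_injective α (funext fun p => congrFun h (Sum.inl p))
  have henergy : ∀ i, wt ((HX H1 H2).mulVec (v i)) = wt (H1.mulVec (u i)) := fun i => by
    rw [hv, HX_mulVec_colVec, wt_colVec]
  refine ⟨henergy, (eb_le_sup_of_path H1 xbar u ?_ ?_ ?_).trans_eq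
    (Finset.sup_congr rfl fun i _ => (henergy i).symm)⟩
  · exact hembed (by simpa [hv] using h0)
  · exact hembed ((hv _).symm.trans hlast)
  · intro i
    simpa only [hv, ← sumElim_zero_add, ← colVec_add, wt_sumElim_zero, wt_colVec] using hstep i

theorem stmt9 {r1 n1 r2 n2 F : ℕ}
    (H1 : Matrix (Fin r1) (Fin n1) (ZMod 2)) (H2 : Matrix (Fin r2) (Fin n2) (ZMod 2))
    (α : Fin n2) (xbar : Fin n1 → ZMod 2) (hx : H1.mulVec xbar = 0)
    (v : Fin (F + 1) → (Fin n1 × Fin n2) ⊕ (Fin r1 × Fin r2) → ZMod 2)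
    (u : Fin (F + 1) → Fin n1 → ZMod 2)
    (hform : ∀ i, v i = Sum.elim (fun p => if p.2 = α then u i p.1 else 0) 0)
    (h0 : v 0 = 0)
    (hlast : v (Fin.last F) = Sum.elim (fun p => if p.2 = α then xbar p.1 else 0) 0)
    (hstep : ∀ i : Fin F, wt (v i.castSucc + v i.succ) ≤ 1) :
    (∀ i, wt ((HX H1 H2).mulVec (v i)) = wt (H1.mulVec (u i))) ∧
    eb H1 xbar ≤ Finset.univ.sup (fun i => wt ((HX H1 H2).mulVec (v i))) :=
  stmt9_general H1 H2 α xbar v u hform h0 hlast hstep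
end

section
/- Let H_1 (r_1×n_1) and H_2 (r_2×n_2) be matrices over F_2, H_X = (H_1 ⊗ I_{n_2} | I_{r_1} ⊗ H_2^T), and let x̄ ∈ ker(H_1), α ∈ {1,...,n_2}. Then the energy barrier of L = (x̄ ⊗ e_α, 0) with respect to H_X satisfies Δ_{H_X}(L) ≤ Δ_{H_1}(x̄): any classical path 0 = u_0,...,u_F = x̄ achieving the classical energy barrier lifts to a quantum path 0 = (u_0 ⊗ e_α, 0), ..., (u_F ⊗ e_α, 0) = L with the same maximum energy. -/
open Matrix Kronecker

/-!
A single-bit-flip path `0 = u₀, …, u_F = x̄` for `H₁` lifts to the path `(u_k ⊗ e_α, 0)` for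
`H_X`. The lift is additive and weight-preserving, so consecutive vectors still differ in at most
one bit, and `H_X (u ⊗ e_α, 0) = (H₁ u) ⊗ e_α` has the same weight as `H₁ u`, so energies are
unchanged along the path.
-/

variable {ι κ γ μ ι' μ' : Type*} [Fintype ι] [Fintype κ] [Fintype γ]

section EnergyBarrier

variable [Fintype μ] [Fintype ι'] [Fintype μ']

def barrierBounds (H : Matrix μ ι (ZMod 2)) (s : ι → ZMod 2) : Set ℕ :=
  {B | ∃ F : ℕ, ∃ v : Fin (F + 1) → ι → ZMod 2,
    v 0 = 0 ∧ v (Fin.last F) = s ∧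
    (∀ i : Fin F, wt (v i.castSucc + v i.succ) ≤ 1) ∧
    ∀ i, wt (H.mulVec (v i)) ≤ B}

lemma wt_le_one_of_forall_ne {v : ι → ZMod 2} (i : ι) (hv : ∀ j ≠ i, v j = 0) : wt v ≤ 1 :=
  Finset.card_le_one.2 fun a ha b hb => by
    simp only [Finset.mem_filter, Finset.mem_univ, true_and] at ha hb
    exact (not_not.1 (mt (hv a) ha)).trans (not_not.1 (mt (hv b) hb)).symm

/-- Filling in the bits of `s` one at a time gives a path; without it `eb H s` would be the junk
value `sInf ∅ = 0`. -/
lemma barrierBounds_nonempty (H : Matrix μ ι (ZMod 2)) (s : ι → ZMod 2) :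
    (barrierBounds H s).Nonempty := by
  let e := Fintype.equivFin ι
  refine ⟨Fintype.card μ, Fintype.card ι, fun k j => if (e j : ℕ) < k then s j else 0,
    ?_, ?_, fun i => ?_, fun _ => Finset.card_filter_le _ _⟩
  · funext j; simp
  · funext j; simp
  · refine wt_le_one_of_forall_ne (e.symm i) fun j hj => ?_
    have hji : (e j : ℕ) ≠ i := fun h => hj (e.symm_apply_eq.2 (Fin.ext h.symm)).symm
    simp only [Pi.add_apply, Fin.val_castSucc, Fin.val_succ]
    rw [if_congr (by omega : (e j : ℕ) < i ↔ (e j : ℕ) < i + 1) rfl rfl]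
    exact CharTwo.add_self_eq_zero _

lemma barrierBounds_subset_of_map {H : Matrix μ ι (ZMod 2)} {H' : Matrix μ' ι' (ZMod 2)}
    (f : (ι → ZMod 2) →+ (ι' → ZMod 2)) (hwt : ∀ u, wt (f u) ≤ wt u)
    (henergy : ∀ u, wt (H' *ᵥ f u) ≤ wt (H *ᵥ u)) (s : ι → ZMod 2) :
    barrierBounds H s ⊆ barrierBounds H' (f s) := by
  rintro B ⟨F, v, h0, hlast, hstep, hB⟩
  refine ⟨F, f ∘ v, by simp [h0], by simp [hlast], fun i => ?_,
    fun i => (henergy _).trans (hB i)⟩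
  simpa only [Function.comp_apply, map_add] using (hwt _).trans (hstep i)

theorem eb_map_le {H : Matrix μ ι (ZMod 2)} {H' : Matrix μ' ι' (ZMod 2)}
    (f : (ι → ZMod 2) →+ (ι' → ZMod 2)) (hwt : ∀ u, wt (f u) ≤ wt u)
    (henergy : ∀ u, wt (H' *ᵥ f u) ≤ wt (H *ᵥ u)) (s : ι → ZMod 2) :
    eb H' (f s) ≤ eb H s :=
  csInf_le_csInf' (barrierBounds_nonempty H s) (barrierBounds_subset_of_map f hwt henergy s)

end EnergyBarrier

lemma wt_sumElim_zero_s10 (v : ι → ZMod 2) : wt (Sum.elim v (0 : γ → ZMod 2)) = wt v := by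
  unfold wt
  rw [← Finset.card_map (Function.Embedding.inl (β := γ)) (s := {i | v i ≠ 0})]
  congr 1
  ext (i | i) <;> simp

section TensorSingle

variable [DecidableEq κ]

/-- The vector `u ⊗ e_a`. -/
def tensorSingle (a : κ) (u : ι → ZMod 2) : ι × κ → ZMod 2 :=
  fun p => if p.2 = a then u p.1 else 0

lemma wt_tensorSingle (a : κ) (u : ι → ZMod 2) : wt (tensorSingle a u) = wt u := by
  unfold wt tensorSingle
  rw [← Finset.card_map (Function.Embedding.sectL ι a) (s := {j | u j ≠ 0})]
  congr 1
  ext ⟨j, b⟩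
  simp [and_comm, eq_comm]

lemma kronecker_one_mulVec_tensorSingle (H : Matrix μ ι (ZMod 2)) (a : κ) (u : ι → ZMod 2) :
    (H ⊗ₖ (1 : Matrix κ κ (ZMod 2))) *ᵥ tensorSingle a u = tensorSingle a (H *ᵥ u) := by
  ext ⟨i, b⟩
  simp [tensorSingle, mulVec, dotProduct, Fintype.sum_prod_type, one_apply]

/-- `u ↦ (u ⊗ e_a, 0)`. -/
def inlTensorSingle (a : κ) : (ι → ZMod 2) →+ ((ι × κ) ⊕ γ → ZMod 2) :=
  AddMonoidHom.mk' (fun u => Sum.elim (tensorSingle a u) 0) fun u v => by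
    ext (p | p)
    · simp only [Sum.elim_inl, Pi.add_apply, tensorSingle]
      split_ifs <;> simp
    · simp

lemma wt_inlTensorSingle (a : κ) (u : ι → ZMod 2) :
    wt (inlTensorSingle (γ := γ) a u) = wt u :=
  (wt_sumElim_zero_s10 _).trans (wt_tensorSingle a u)

end TensorSingle

lemma HX_mulVec_inlTensorSingle {r1 n1 r2 n2 : ℕ} (H1 : Matrix (Fin r1) (Fin n1) (ZMod 2))
    (H2 : Matrix (Fin r2) (Fin n2) (ZMod 2)) (a : Fin n2) (u : Fin n1 → ZMod 2) :
    HX H1 H2 *ᵥ inlTensorSingle a u = tensorSingle a (H1 *ᵥ u) := by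
  rw [HX, inlTensorSingle, AddMonoidHom.mk'_apply, fromCols_mulVec_sumElim, mulVec_zero, add_zero,
    kronecker_one_mulVec_tensorSingle]

theorem stmt10_general {r1 n1 r2 n2 : ℕ}
    (H1 : Matrix (Fin r1) (Fin n1) (ZMod 2)) (H2 : Matrix (Fin r2) (Fin n2) (ZMod 2))
    (xbar : Fin n1 → ZMod 2) (α : Fin n2) :
    eb (HX H1 H2)
      (Sum.elim (fun p : Fin n1 × Fin n2 => if p.2 = α then xbar p.1 else 0)
        (0 : Fin r1 × Fin r2 → ZMod 2)) ≤ eb H1 xbar :=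
  eb_map_le (inlTensorSingle α) (fun u => (wt_inlTensorSingle α u).le)
    (fun u => by rw [HX_mulVec_inlTensorSingle, wt_tensorSingle]) xbar

theorem stmt10 {r1 n1 r2 n2 : ℕ}
    (H1 : Matrix (Fin r1) (Fin n1) (ZMod 2)) (H2 : Matrix (Fin r2) (Fin n2) (ZMod 2))
    (xbar : Fin n1 → ZMod 2) (hx : H1.mulVec xbar = 0) (α : Fin n2) :
    eb (HX H1 H2)
      (Sum.elim (fun p : Fin n1 × Fin n2 => if p.2 = α then xbar p.1 else 0)
        (0 : Fin r1 × Fin r2 → ZMod 2)) ≤ eb H1 xbar :=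
  stmt10_general H1 H2 xbar α
end
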